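/- arXiv:2504.09204 — 2 statements merged into one kernel-verified Lean document; each statement's English description precedes it below -/
import Mathlib

section
/- Let n ≥ 3, let k ≥ 1 be an integer with 3k ≤ n, and set m = 2k. Then ε_k + ε_{3k} is a root of B_n of height 2m which is not the sum of two roots of height m, and every positive root of B_n whose height is divisible by m can be written as a sum of elements of R_m ∪ {ε_k + ε_{3k}}. -/
/-! Write `M_m` for an additive submonoid containing the roots `R_m` of height `m`. It contains
`ε_j - ε_i` whenever `i ≤ j` and `i ≡ j (mod m)`, so membership of `ε_c + ε_d` in `M_m` transports
to every `ε_i + ε_j` with `i ≥ c`, `j ≥ d` in the same residue classes. For `i + j ≡ 0 (mod m)`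
take `c, d` the least representatives of the classes of `i, j`: then `ε_c + ε_d` is a root of
height `m`, unless `c = d = m/2`, where `ε_k + ε_{3k}` (`m = 2k`) takes its place. Conversely
`v ↦ v_k + v_{3k}` is `≤ 0` on every root of height `2k` but equals `2` at `ε_k + ε_{3k}`. -/

noncomputable section

/-- The standard basis vector `ε_{i+1}` of `ℝ^n` (0-based index `i`). -/
def eps (n : ℕ) (i : Fin n) : Fin n → ℝ := fun j => if j = i then 1 else 0

/-- The root system of type `Bₙ`. -/
def Broots (n : ℕ) : Set (Fin n → ℝ) :=
  {v | (∃ i : Fin n, v = eps n i ∨ v = -eps n i) ∨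
       (∃ i j : Fin n, i < j ∧
         (v = eps n j - eps n i ∨ v = -(eps n j - eps n i) ∨
          v = eps n j + eps n i ∨ v = -(eps n j + eps n i)))}

/-- The height functional for type `Bₙ`. -/
def htB (n : ℕ) (v : Fin n → ℝ) : ℝ := ∑ i : Fin n, v i * ((i : ℝ) + 1)

lemma modEq_sub_mod_of_dvd_add {m x y : ℕ} (hm : 0 < m) (h : m ∣ x + y) :
    y ≡ m - x % m [MOD m] := by
  refine Nat.ModEq.add_left_cancel' (x % m) ?_
  rw [Nat.add_sub_cancel' (Nat.mod_lt x hm).le]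
  exact ((Nat.mod_modEq x m).add_right y).trans
    ((Nat.modEq_zero_iff_dvd.mpr h).trans (Nat.modEq_zero_iff_dvd.mpr dvd_rfl).symm)

section

variable {n : ℕ}

@[simp] lemma htB_add (a b : Fin n → ℝ) : htB n (a + b) = htB n a + htB n b := by
  simp [htB, add_mul, Finset.sum_add_distrib]

@[simp] lemma htB_neg (a : Fin n → ℝ) : htB n (-a) = -htB n a := by
  simp [htB, Finset.sum_neg_distrib]

@[simp] lemma htB_sub (a b : Fin n → ℝ) : htB n (a - b) = htB n a - htB n b := by
  simp [htB, sub_mul, Finset.sum_sub_distrib]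

@[simp] lemma htB_eps (i : Fin n) : htB n (eps n i) = (i : ℝ) + 1 := by
  simp [htB, eps]

lemma eps_mem_Broots (i : Fin n) : eps n i ∈ Broots n :=
  Or.inl ⟨i, Or.inl rfl⟩

lemma eps_sub_eps_mem_Broots {i j : Fin n} (hij : i < j) : eps n j - eps n i ∈ Broots n :=
  Or.inr ⟨i, j, hij, Or.inl rfl⟩

lemma eps_add_eps_mem_Broots {i j : Fin n} (hij : i ≠ j) : eps n i + eps n j ∈ Broots n := by
  rcases hij.lt_or_gt with h | h
  · exact Or.inr ⟨i, j, h, Or.inr (Or.inr (Or.inl (add_comm _ _)))⟩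
  · exact Or.inr ⟨j, i, h, Or.inr (Or.inr (Or.inl rfl))⟩

lemma Broots_cases_of_htB_pos {v : Fin n → ℝ} (hv : v ∈ Broots n) (hpos : 0 < htB n v) :
    (∃ i, v = eps n i) ∨ (∃ i j, i < j ∧ v = eps n j - eps n i) ∨
      (∃ i j, i < j ∧ v = eps n i + eps n j) := by
  rcases hv with ⟨i, rfl | rfl⟩ | ⟨i, j, hij, rfl | rfl | rfl | rfl⟩
  · exact Or.inl ⟨i, rfl⟩
  · simp only [htB_neg, htB_eps] at hpos
    linarith [Nat.cast_nonneg (α := ℝ) i]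
  · exact Or.inr (Or.inl ⟨i, j, hij, rfl⟩)
  · have : (i : ℝ) < j := by exact_mod_cast hij
    simp only [htB_neg, htB_sub, htB_eps] at hpos
    linarith
  · exact Or.inr (Or.inr ⟨i, j, hij, add_comm _ _⟩)
  · simp only [htB_neg, htB_add, htB_eps] at hpos
    linarith [Nat.cast_nonneg (α := ℝ) i, Nat.cast_nonneg (α := ℝ) j]

def rootsOfHeight (n m : ℕ) : Set (Fin n → ℝ) := {u ∈ Broots n | htB n u = m}

section Generation

variable {m : ℕ} {M : AddSubmonoid (Fin n → ℝ)} (hm : 0 < m) (hM : rootsOfHeight n m ⊆ M)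
include hm hM

lemma eps_sub_eps_mem {i j : Fin n} (hij : i ≤ j) (h : (i : ℕ) ≡ j [MOD m]) :
    eps n j - eps n i ∈ M := by
  obtain ⟨t, ht⟩ := (Nat.modEq_iff_dvd' hij).mp h
  induction t generalizing j with
  | zero =>
    obtain rfl : j = i := by ext; simp at ht; omega
    simp
  | succ t ih =>
    rw [Nat.mul_succ] at ht
    let c : Fin n := ⟨i + m * t, by omega⟩
    have hcj : (j : ℕ) = c + m := by simp only [c]; omega
    have hstep : eps n j - eps n c ∈ M :=
      hM ⟨eps_sub_eps_mem_Broots (by rw [Fin.lt_def]; omega), by simp [hcj]⟩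
    have hic : i ≤ c := by simp [Fin.le_def, c]
    have hc : eps n c - eps n i ∈ M :=
      ih hic ((Nat.modEq_iff_dvd' hic).mpr ⟨t, by simp [c]⟩) (by simp [c])
    simpa using M.add_mem hstep hc

lemma eps_add_eps_mem_of_modEq {c d i j : Fin n} (hci : c ≤ i) (hdj : d ≤ j)
    (hc : (c : ℕ) + 1 ≡ i + 1 [MOD m]) (hd : (d : ℕ) + 1 ≡ j + 1 [MOD m])
    (hcd : eps n c + eps n d ∈ M) : eps n i + eps n j ∈ M := by
  have := M.add_mem (M.add_mem (eps_sub_eps_mem hm hM hci (hc.add_right_cancel' 1)) hcd)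
    (eps_sub_eps_mem hm hM hdj (hd.add_right_cancel' 1))
  convert this using 1
  abel

lemma eps_mem {i : Fin n} (h : m ∣ i + 1) : eps n i ∈ M := by
  have hmi : m ≤ i + 1 := Nat.le_of_dvd i.val.succ_pos h
  let c : Fin n := ⟨m - 1, by omega⟩
  have hc : (c : ℕ) + 1 = m := by simp only [c]; omega
  have hci : (c : ℕ) + 1 ≡ i + 1 [MOD m] := by
    rw [hc]
    exact (Nat.modEq_zero_iff_dvd.mpr dvd_rfl).trans (Nat.modEq_zero_iff_dvd.mpr h).symm
  have hcM : eps n c ∈ M := hM ⟨eps_mem_Broots c, by simp [← hc]⟩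
  have hci' : eps n i - eps n c ∈ M :=
    eps_sub_eps_mem hm hM (by rw [Fin.le_def]; omega) (hci.add_right_cancel' 1)
  simpa using M.add_mem hci' hcM

lemma eps_add_eps_mem {i j : Fin n} (h : m ∣ (i + 1) + (j + 1))
    (hr : 2 * ((i + 1) % m) ≠ m) : eps n i + eps n j ∈ M := by
  set r := ((i : ℕ) + 1) % m
  have hrm : r < m := Nat.mod_lt _ hm
  have hjr : (j : ℕ) + 1 ≡ m - r [MOD m] := modEq_sub_mod_of_dvd_add hm h
  rcases Nat.eq_zero_or_pos r with hr0 | hr0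
  · have hi : m ∣ i + 1 := Nat.dvd_of_mod_eq_zero hr0
    exact M.add_mem (eps_mem hm hM hi) (eps_mem hm hM ((Nat.dvd_add_right hi).mp h))
  · have hri : r ≤ i + 1 := Nat.mod_le _ _
    have hrj : m - r ≤ j + 1 := by
      rw [← Nat.mod_eq_of_lt (by omega : m - r < m), ← hjr]
      exact Nat.mod_le _ _
    let c : Fin n := ⟨r - 1, by omega⟩
    let d : Fin n := ⟨m - r - 1, by omega⟩
    have hc : (c : ℕ) + 1 = r := by simp only [c]; omega
    have hd : (d : ℕ) + 1 = m - r := by simp only [d]; omega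
    have hcd : c ≠ d := by rw [Ne, Fin.ext_iff]; omega
    refine eps_add_eps_mem_of_modEq hm hM (c := c) (d := d) (by rw [Fin.le_def]; omega)
      (by rw [Fin.le_def]; omega) (hc ▸ Nat.mod_modEq _ _) (hd ▸ hjr.symm)
      (hM ⟨eps_add_eps_mem_Broots hcd, ?_⟩)
    simp only [htB_add, htB_eps]
    exact_mod_cast (by omega : (c : ℕ) + 1 + ((d : ℕ) + 1) = m)

end Generation

lemma eps_add_eps_mem_of_mod_eq_half {k : ℕ} {M : AddSubmonoid (Fin n → ℝ)} (hk : 0 < k)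
    (hM : rootsOfHeight n (2 * k) ⊆ M) {a b i j : Fin n} (ha : (a : ℕ) + 1 = k)
    (hb : (b : ℕ) + 1 = 3 * k) (hab : eps n a + eps n b ∈ M) (hij : i < j)
    (hi : ((i : ℕ) + 1) % (2 * k) = k) (h : 2 * k ∣ (i + 1) + (j + 1)) :
    eps n i + eps n j ∈ M := by
  have hjk : ((j : ℕ) + 1) % (2 * k) = k := by
    rw [modEq_sub_mod_of_dvd_add (by omega) h, hi, show 2 * k - k = k by omega,
      Nat.mod_eq_of_lt (by omega)]
  have h3k : 3 * k % (2 * k) = k := by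
    rw [show 3 * k = k + 2 * k * 1 by ring, Nat.add_mul_mod_self_left, Nat.mod_eq_of_lt (by omega)]
  have hki : k ≤ i + 1 := hi ▸ Nat.mod_le _ _
  -- `j + 1 ≡ k (mod 2k)` and `j + 1 > k` force `j + 1 ≥ 3k`
  have hbj : b ≤ j := by
    have hdiv := Nat.div_add_mod ((j : ℕ) + 1) (2 * k)
    have hq : (j + 1) / (2 * k) ≠ 0 := by
      intro hq0
      rw [hq0, hjk] at hdiv
      rw [Fin.lt_def] at hij
      omega
    have := Nat.le_mul_of_pos_right (2 * k) (Nat.pos_of_ne_zero hq)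
    rw [Fin.le_def]
    omega
  refine eps_add_eps_mem_of_modEq (by omega) hM (by rw [Fin.le_def]; omega) hbj ?_ ?_ hab
  · rw [ha]; exact (Nat.mod_eq_of_lt (by omega)).trans hi.symm
  · rw [hb]; exact h3k.trans hjk.symm

lemma mem_closure_of_htB_dvd {k : ℕ} (hk : 0 < k) {a b : Fin n} (ha : (a : ℕ) + 1 = k)
    (hb : (b : ℕ) + 1 = 3 * k) {v : Fin n → ℝ} (hv : v ∈ Broots n) (hpos : 0 < htB n v)
    (hdvd : ∃ l : ℤ, htB n v = ((2 * k : ℕ) : ℝ) * l) :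
    v ∈ AddSubmonoid.closure (rootsOfHeight n (2 * k) ∪ {eps n a + eps n b}) := by
  set M := AddSubmonoid.closure (rootsOfHeight n (2 * k) ∪ {eps n a + eps n b})
  have hM : rootsOfHeight n (2 * k) ⊆ M := Set.subset_union_left.trans AddSubmonoid.subset_closure
  have hm : 0 < 2 * k := by omega
  obtain ⟨l, hl⟩ := hdvd
  rcases Broots_cases_of_htB_pos hv hpos with ⟨i, rfl⟩ | ⟨i, j, hij, rfl⟩ | ⟨i, j, hij, rfl⟩
  · refine eps_mem hm hM (Int.natCast_dvd_natCast.mp ⟨l, ?_⟩)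
    simp only [htB_eps] at hl
    exact_mod_cast hl
  · refine eps_sub_eps_mem hm hM hij.le (Nat.modEq_iff_dvd.mpr ⟨l, ?_⟩)
    simp only [htB_sub, htB_eps, add_sub_add_right_eq_sub] at hl
    exact_mod_cast hl
  · have h : 2 * k ∣ (i + 1) + (j + 1) := Int.natCast_dvd_natCast.mp ⟨l, by
      simp only [htB_add, htB_eps] at hl
      exact_mod_cast hl⟩
    by_cases hr : 2 * (((i : ℕ) + 1) % (2 * k)) = 2 * k
    · exact eps_add_eps_mem_of_mod_eq_half hk hM ha hb
        (AddSubmonoid.subset_closure (Set.mem_union_right _ rfl)) hij (by omega) h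
    · exact eps_add_eps_mem hm hM h hr

lemma apply_add_apply_nonpos_of_htB_eq {k : ℕ} {a b : Fin n} (ha : (a : ℕ) + 1 = k)
    (hb : (b : ℕ) + 1 = 3 * k) {r : Fin n → ℝ} (hr : r ∈ Broots n) (ht : htB n r = 2 * k) :
    r a + r b ≤ 0 := by
  have hpos : 0 < htB n r := by rw [ht]; exact_mod_cast (by omega : 0 < 2 * k)
  rcases Broots_cases_of_htB_pos hr hpos with ⟨i, rfl⟩ | ⟨i, j, hij, rfl⟩ | ⟨i, j, hij, rfl⟩
  all_goals
    simp only [htB_eps, htB_sub, htB_add] at ht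
    simp only [eps, Pi.add_apply, Pi.sub_apply, Fin.ext_iff]
  · have : (i : ℕ) + 1 = 2 * k := by exact_mod_cast ht
    split_ifs <;> norm_num <;> omega
  · have : (j : ℕ) = i + 2 * k := by exact_mod_cast (by linarith : (j : ℝ) = i + 2 * k)
    rw [Fin.lt_def] at hij
    split_ifs <;> norm_num <;> omega
  · have : (i : ℕ) + 1 + (j + 1) = 2 * k := by exact_mod_cast ht
    rw [Fin.lt_def] at hij
    split_ifs <;> norm_num <;> omega

lemma eps_add_eps_ne_add {k : ℕ} {a b : Fin n} (ha : (a : ℕ) + 1 = k) (hb : (b : ℕ) + 1 = 3 * k)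
    {r s : Fin n → ℝ} (hr : r ∈ Broots n) (hrt : htB n r = 2 * k) (hs : s ∈ Broots n)
    (hst : htB n s = 2 * k) : eps n a + eps n b ≠ r + s := by
  intro h
  have hab : a ≠ b := by rw [Ne, Fin.ext_iff]; omega
  have hra : (1 : ℝ) = r a + s a := by simpa [eps, hab] using congr_fun h a
  have hrb : (1 : ℝ) = r b + s b := by simpa [eps, hab.symm] using congr_fun h b
  linarith [apply_add_apply_nonpos_of_htB_eq ha hb hr hrt,
    apply_add_apply_nonpos_of_htB_eq ha hb hs hst]

end

/-- let `n ≥ 3`, `k ≥ 1` with `3k ≤ n`, and `m = 2k`. Then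
`ε_k + ε_{3k}` is a root of `Bₙ` of height `2m` which is not the sum of two roots of
height `m`, and every positive root of `Bₙ` whose height is divisible by `m` is a sum
of elements of `R_m ∪ {ε_k + ε_{3k}}`. -/
theorem stmt8 (n k : ℕ) (hk : 1 ≤ k) (h3k : 3 * k ≤ n) :
    let m : ℕ := 2 * k
    let δ : Fin n → ℝ := eps n ⟨k - 1, by omega⟩ + eps n ⟨3 * k - 1, by omega⟩
    δ ∈ Broots n ∧ htB n δ = (2 * m : ℕ) ∧
    (¬ ∃ a b : Fin n → ℝ, a ∈ Broots n ∧ htB n a = (m : ℝ) ∧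
        b ∈ Broots n ∧ htB n b = (m : ℝ) ∧ δ = a + b) ∧
    (∀ v ∈ Broots n, 0 < htB n v → (∃ l : ℤ, htB n v = (m : ℝ) * l) →
      v ∈ AddSubmonoid.closure ({u ∈ Broots n | htB n u = (m : ℝ)} ∪ {δ})) := by
  intro m δ
  have ha : k - 1 + 1 = k := by omega
  have hb : 3 * k - 1 + 1 = 3 * k := by omega
  refine ⟨eps_add_eps_mem_Broots (by simp [Fin.ext_iff]; omega), ?_, ?_,
    fun v hv hpos hdvd => mem_closure_of_htB_dvd hk ha hb hv hpos hdvd⟩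
  · simp only [δ, m, htB_add, htB_eps]
    exact_mod_cast (by omega : k - 1 + 1 + (3 * k - 1 + 1) = 2 * (2 * k))
  · rintro ⟨r, s, hr, hrt, hs, hst, h⟩
    push_cast [m] at hrt hst
    exact eps_add_eps_ne_add ha hb hr hrt hs hst h
end
end

section
/- In E6, the vector δ_6 = α_1 + α_2 + α_3 + α_4 + α_5 + α_6 (coefficient vector (1,1,1,1,1,1)) is a root of height 6 which is not the sum of two roots of height 3. Moreover, the number of positive roots of E6 whose height is divisible by 3 is 9, and every positive root whose height is divisible by 3 can be written as a sum of elements of R_3 ∪ {δ_6}. -/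
/-!
The form `cᵀ A c` is positive definite, so the coefficients of a root are bounded, and every claim
becomes a finite check over a box of coefficient vectors. If `δ₆ = a + b` with `a, b` roots, then
both `a` and `δ₆ - a` lie in that box, which leaves only a small box to search. Of the nine positive
roots of height divisible by `3`, five have height `3`, one is `δ₆`, and the other three are sums
of two of these.
-/

open Matrix

/-- The Cartan matrix of type `E₆` in Bourbaki numbering (index `i : Fin 6` is node `i+1`):
the chain is `1 - 3 - 4 - 5 - 6` and node `2` is joined to node `4`. -/
def cartanE6 : Matrix (Fin 6) (Fin 6) ℤ :=
  !![ 2,  0, -1,  0,  0,  0;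
      0,  2,  0, -1,  0,  0;
     -1,  0,  2, -1,  0,  0;
      0, -1, -1,  2, -1,  0;
      0,  0,  0, -1,  2, -1;
      0,  0,  0,  0, -1,  2]

/-- The roots of `E₆`, identified with their coefficient vectors `c` with respect to the
simple roots: `R = {c ∈ ℤ^6 : cᵀ A c = 2}`. -/
def rootsE6 : Set (Fin 6 → ℤ) := {c | c ⬝ᵥ cartanE6.mulVec c = 2}

/-- The height of a coefficient vector. -/
def htE6 (c : Fin 6 → ℤ) : ℤ := ∑ i, c i

/-- `δ₆ = α₁ + α₂ + α₃ + α₄ + α₅ + α₆`, coefficient vector `(1,1,1,1,1,1)`. -/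
def δ₆ : Fin 6 → ℤ := ![1, 1, 1, 1, 1, 1]

def quadFormE6 (c : Fin 6 → ℤ) : ℤ :=
  2 * (c 0 ^ 2 + c 1 ^ 2 + c 2 ^ 2 + c 3 ^ 2 + c 4 ^ 2 + c 5 ^ 2)
    - 2 * (c 0 * c 2 + c 1 * c 3 + c 2 * c 3 + c 3 * c 4 + c 4 * c 5)

lemma dotProduct_cartanE6_mulVec_self (c : Fin 6 → ℤ) :
    c ⬝ᵥ cartanE6 *ᵥ c = quadFormE6 c := by
  simp [cartanE6, quadFormE6, dotProduct, mulVec, Fin.sum_univ_six]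
  ring

lemma mem_rootsE6_iff {c : Fin 6 → ℤ} : c ∈ rootsE6 ↔ quadFormE6 c = 2 := by
  rw [← dotProduct_cartanE6_mulVec_self]
  rfl

-- Deciding membership through the explicit polynomial keeps the kernel away from the matrix
-- product, which makes the box searches below fast.
instance : DecidablePred (· ∈ rootsE6) := fun _ => decidable_of_iff _ mem_rootsE6_iff.symm

/- Cauchy–Schwarz for the positive definite form gives `c i ^ 2 ≤ quadFormE6 c * (A⁻¹) i i`, and the
diagonal of the inverse Cartan matrix is `(4/3, 2, 10/3, 6, 10/3, 4/3)`; the hints are the squares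
completing the form along the Dynkin diagram. -/
lemma sq_lt_of_quadFormE6_eq_two {c : Fin 6 → ℤ} (hc : quadFormE6 c = 2) :
    c 0 ^ 2 < 2 ^ 2 ∧ c 1 ^ 2 < 3 ^ 2 ∧ c 2 ^ 2 < 3 ^ 2 ∧ c 3 ^ 2 < 4 ^ 2 ∧ c 4 ^ 2 < 3 ^ 2 ∧
      c 5 ^ 2 < 2 ^ 2 := by
  rw [quadFormE6] at hc
  refine ⟨?_, ?_, ?_, ?_, ?_, ?_⟩
  · nlinarith [sq_nonneg (5 * c 0 - 4 * c 2), sq_nonneg (2 * c 1 - c 3),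
      sq_nonneg (6 * c 2 - 5 * c 3), sq_nonneg (2 * c 3 - 3 * c 4), sq_nonneg (c 4 - 2 * c 5)]
  · nlinarith [sq_nonneg (2 * c 0 - c 2), sq_nonneg (3 * c 1 - 2 * c 3),
      sq_nonneg (3 * c 2 - 2 * c 3), sq_nonneg (2 * c 3 - 3 * c 4), sq_nonneg (c 4 - 2 * c 5)]
  · nlinarith [sq_nonneg (2 * c 0 - c 2), sq_nonneg (2 * c 1 - c 3),
      sq_nonneg (6 * c 2 - 5 * c 3), sq_nonneg (2 * c 3 - 3 * c 4), sq_nonneg (c 4 - 2 * c 5)]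
  · nlinarith [sq_nonneg (2 * c 0 - c 2), sq_nonneg (2 * c 1 - c 3),
      sq_nonneg (3 * c 2 - 2 * c 3), sq_nonneg (2 * c 3 - 3 * c 4), sq_nonneg (c 4 - 2 * c 5)]
  · nlinarith [sq_nonneg (2 * c 0 - c 2), sq_nonneg (2 * c 1 - c 3),
      sq_nonneg (3 * c 2 - 2 * c 3), sq_nonneg (5 * c 3 - 6 * c 4), sq_nonneg (c 4 - 2 * c 5)]
  · nlinarith [sq_nonneg (2 * c 0 - c 2), sq_nonneg (2 * c 1 - c 3),
      sq_nonneg (3 * c 2 - 2 * c 3), sq_nonneg (5 * c 3 - 6 * c 4), sq_nonneg (4 * c 4 - 5 * c 5)]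

def rootBound : Fin 6 → ℤ := ![1, 2, 2, 3, 2, 1]

lemma abs_le_rootBound {c : Fin 6 → ℤ} (hc : c ∈ rootsE6) (i : Fin 6) :
    |c i| ≤ rootBound i := by
  suffices c i ^ 2 < (rootBound i + 1) ^ 2 by
    have := abs_lt_of_sq_lt_sq this (by fin_cases i <;> decide)
    omega
  obtain ⟨h0, h1, h2, h3, h4, h5⟩ := sq_lt_of_quadFormE6_eq_two (mem_rootsE6_iff.mp hc)
  fin_cases i
  exacts [h0, h1, h2, h3, h4, h5]

lemma mem_Icc_of_mem_rootsE6 {c : Fin 6 → ℤ} (hc : c ∈ rootsE6) :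
    c ∈ Finset.Icc (-rootBound) rootBound :=
  Finset.mem_Icc.mpr ⟨fun i => (abs_le.mp (abs_le_rootBound hc i)).1,
    fun i => (abs_le.mp (abs_le_rootBound hc i)).2⟩

set_option maxRecDepth 10000 in
lemma not_exists_height_three_add_eq_δ₆ :
    ¬ ∃ a b : Fin 6 → ℤ, a ∈ rootsE6 ∧ htE6 a = 3 ∧ b ∈ rootsE6 ∧ htE6 b = 3 ∧ δ₆ = a + b := by
  have key : ∀ a ∈ Finset.Icc (δ₆ - rootBound) rootBound,
      a ∈ rootsE6 → δ₆ - a ∈ rootsE6 → htE6 a ≠ 3 := by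
    decide
  rintro ⟨a, b, ha, hta, hb, -, hab⟩
  obtain rfl : b = δ₆ - a := eq_sub_of_add_eq' hab.symm
  have hbox : a ∈ Finset.Icc (δ₆ - rootBound) rootBound :=
    Finset.mem_Icc.mpr ⟨sub_le_comm.mp (Finset.mem_Icc.mp (mem_Icc_of_mem_rootsE6 hb)).2,
      (Finset.mem_Icc.mp (mem_Icc_of_mem_rootsE6 ha)).2⟩
  exact key a hbox ha hb hta

def positiveRootsE6HeightDvdThree : Finset (Fin 6 → ℤ) :=
  {![0, 0, 0, 1, 1, 1], ![0, 0, 1, 1, 1, 0], ![0, 1, 0, 1, 1, 0], ![0, 1, 1, 1, 0, 0],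
    ![1, 0, 1, 1, 0, 0], ![0, 1, 1, 2, 1, 1], ![1, 1, 1, 1, 1, 1], ![1, 1, 1, 2, 1, 0],
    ![1, 1, 2, 2, 2, 1]}

set_option maxRecDepth 10000 in
lemma coe_positiveRootsE6HeightDvdThree :
    ↑positiveRootsE6HeightDvdThree = {c ∈ rootsE6 | (∀ i, 0 ≤ c i) ∧ 3 ∣ htE6 c} := by
  have complete : ∀ c ∈ Finset.Icc 0 rootBound,
      c ∈ rootsE6 → 3 ∣ htE6 c → c ∈ positiveRootsE6HeightDvdThree := by
    decide
  have sound : ∀ c ∈ positiveRootsE6HeightDvdThree,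
      c ∈ rootsE6 ∧ (∀ i, 0 ≤ c i) ∧ 3 ∣ htE6 c := by
    decide
  ext c
  refine ⟨sound c, fun ⟨hc, hpos, hdvd⟩ => complete c ?_ hc hdvd⟩
  exact Finset.mem_Icc.mpr ⟨hpos, (Finset.mem_Icc.mp (mem_Icc_of_mem_rootsE6 hc)).2⟩

lemma mem_closure_of_mem_positiveRootsE6HeightDvdThree {c : Fin 6 → ℤ}
    (hc : c ∈ positiveRootsE6HeightDvdThree) :
    c ∈ AddSubmonoid.closure ({a ∈ rootsE6 | htE6 a = 3} ∪ {δ₆}) := by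
  have gen : ∀ a ∈ rootsE6, htE6 a = 3 →
      a ∈ AddSubmonoid.closure ({a ∈ rootsE6 | htE6 a = 3} ∪ {δ₆}) :=
    fun a ha ht => AddSubmonoid.subset_closure (Or.inl ⟨ha, ht⟩)
  have hδ : δ₆ ∈ AddSubmonoid.closure ({a ∈ rootsE6 | htE6 a = 3} ∪ {δ₆}) :=
    AddSubmonoid.subset_closure (Or.inr rfl)
  simp only [positiveRootsE6HeightDvdThree, Finset.mem_insert, Finset.mem_singleton] at hc
  obtain rfl | rfl | rfl | rfl | rfl | rfl | rfl | rfl | rfl := hc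
  iterate 5 exact gen _ (by decide) (by decide)
  · rw [show (![0, 1, 1, 2, 1, 1] : Fin 6 → ℤ) = ![0, 0, 0, 1, 1, 1] + ![0, 1, 1, 1, 0, 0] by
      decide]
    exact add_mem (gen _ (by decide) (by decide)) (gen _ (by decide) (by decide))
  · exact hδ
  · rw [show (![1, 1, 1, 2, 1, 0] : Fin 6 → ℤ) = ![0, 1, 0, 1, 1, 0] + ![1, 0, 1, 1, 0, 0] by
      decide]
    exact add_mem (gen _ (by decide) (by decide)) (gen _ (by decide) (by decide))
  · rw [show (![1, 1, 2, 2, 2, 1] : Fin 6 → ℤ) = δ₆ + ![0, 0, 1, 1, 1, 0] by decide]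
    exact add_mem hδ (gen _ (by decide) (by decide))

/-- in `E₆`, `δ₆` is a root of height `6` which is not the sum of two
roots of height `3`; the number of positive roots of height divisible by `3` is `9`,
and every positive root of height divisible by `3` is a sum of elements of
`R₃ ∪ {δ₆}`. -/
theorem stmt14 :
    δ₆ ∈ rootsE6 ∧ htE6 δ₆ = 6 ∧
    (¬ ∃ a b : Fin 6 → ℤ, a ∈ rootsE6 ∧ htE6 a = 3 ∧ b ∈ rootsE6 ∧ htE6 b = 3 ∧
        δ₆ = a + b) ∧
    {c ∈ rootsE6 | (∀ i, 0 ≤ c i) ∧ 3 ∣ htE6 c}.ncard = 9 ∧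
    (∀ c ∈ rootsE6, (∀ i, 0 ≤ c i) → 3 ∣ htE6 c →
      c ∈ AddSubmonoid.closure ({a ∈ rootsE6 | htE6 a = 3} ∪ {δ₆})) := by
  refine ⟨by decide, by decide, not_exists_height_three_add_eq_δ₆, ?_, ?_⟩
  · rw [← coe_positiveRootsE6HeightDvdThree, Set.ncard_coe_finset]
    decide
  · intro c hc hpos hdvd
    apply mem_closure_of_mem_positiveRootsE6HeightDvdThree
    rw [← Finset.mem_coe, coe_positiveRootsE6HeightDvdThree]
    exact ⟨hc, hpos, hdvd⟩
end
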